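/- Fix 0 < γ < 1, a nonzero vector α ∈ ℝ^n, a vector μ ∈ ℝ^n, and a symmetric positive definite n×n matrix Σ. Then the supremum, over all probability measures P on ℝ^n with finite second moment, mean μ, and covariance matrix Σ, of CVaR_{1−γ}^P of the standardized linear function x ↦ αᵀ(x − μ)/√(αᵀΣα), equals √((1−γ)/γ). -/

import Mathlib

open MeasureTheory Matrix
open scoped ENNReal NNReal RealInnerProductSpace Matrix.Norms.L2Operator

noncomputable section

def IsCoupling {α β : Type*} [MeasurableSpace α] [MeasurableSpace β]
    (π : Measure (α × β)) (P : Measure α) (Q : Measure β) : Prop :=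
  π.fst = P ∧ π.snd = Q

noncomputable def W2sq {E : Type*} [SubtractionMonoid E] [MeasurableSpace E]
    (c : E → ℝ) (P Q : Measure E) : ℝ≥0∞ :=
  ⨅ π ∈ {π : Measure (E × E) | IsCoupling π P Q},
    ∫⁻ ξ, ENNReal.ofReal ((c (ξ.1 - ξ.2)) ^ 2) ∂π

def FiniteSecondMoment {E : Type*} [NormedAddCommGroup E] [MeasurableSpace E]
    (P : Measure E) : Prop :=
  Integrable (fun x => ‖x‖ ^ 2) P

def ambiguitySet {E : Type*} [NormedAddCommGroup E] [MeasurableSpace E]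
    (c : E → ℝ) (ε : ℝ) (P : Measure E) : Set (Measure E) :=
  {Q | IsProbabilityMeasure Q ∧ FiniteSecondMoment Q ∧ W2sq c Q P ≤ ENNReal.ofReal (ε ^ 2)}

noncomputable def mulVecMap {m d : ℕ} (A : Matrix (Fin m) (Fin d) ℝ) :
    EuclideanSpace ℝ (Fin d) → EuclideanSpace ℝ (Fin m) :=
  fun x => (EuclideanSpace.equiv (Fin m) ℝ).symm (A.mulVec ((EuclideanSpace.equiv (Fin d) ℝ) x))

noncomputable def meanVec {d : ℕ} (P : Measure (EuclideanSpace ℝ (Fin d))) :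
    EuclideanSpace ℝ (Fin d) :=
  ∫ x, x ∂P

noncomputable def covMatrix {d : ℕ} (P : Measure (EuclideanSpace ℝ (Fin d))) :
    Matrix (Fin d) (Fin d) ℝ :=
  Matrix.of fun i j => ∫ x, (x i - meanVec P i) * (x j - meanVec P j) ∂P

open scoped Classical in
noncomputable def psdSqrt {d : ℕ} (M : Matrix (Fin d) (Fin d) ℝ) : Matrix (Fin d) (Fin d) ℝ :=
  if h : M.PosSemidef then
    (h.1.eigenvectorUnitary : Matrix (Fin d) (Fin d) ℝ) *
      diagonal ((↑) ∘ (Real.sqrt ·) ∘ h.1.eigenvalues) *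
      (star h.1.eigenvectorUnitary : Matrix (Fin d) (Fin d) ℝ) else 0

noncomputable def gelbrichSq {d : ℕ} (μ1 : EuclideanSpace ℝ (Fin d))
    (S1 : Matrix (Fin d) (Fin d) ℝ) (μ2 : EuclideanSpace ℝ (Fin d))
    (S2 : Matrix (Fin d) (Fin d) ℝ) : ℝ :=
  ‖μ1 - μ2‖ ^ 2 + (S1 + S2 - (2 : ℝ) • psdSqrt (psdSqrt S1 * S2 * psdSqrt S1)).trace

noncomputable def CVaR {E : Type*} [MeasurableSpace E] (γ : ℝ) (P : Measure E) (f : E → ℝ) : ℝ :=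
  ⨅ τ : ℝ, τ + (1 / γ) * ∫ x, max (f x - τ) 0 ∂P

-- ===== auxiliary lemmas =====

section Aux

lemma my_integrable_dirac {α E : Type*} [MeasurableSpace α] [MeasurableSingletonClass α]
    [NormedAddCommGroup E] (f : α → E) (a : α) : Integrable f (Measure.dirac a) := by
  have h : f =ᵐ[Measure.dirac a] fun _ => f a := by
    rw [Filter.EventuallyEq, ae_dirac_eq]
    exact Filter.eventually_pure.2 rfl
  exact (integrable_congr h).2 (integrable_const _)

lemma integral_finsum_dirac {α E ι : Type*} [MeasurableSpace α] [MeasurableSingletonClass α]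
    [NormedAddCommGroup E] [NormedSpace ℝ E] [CompleteSpace E] [Fintype ι]
    (f : α → E) (x : ι → α) (w : ι → ℝ) :
    ∫ y, f y ∂(∑ i : ι, ENNReal.ofReal (w i) • Measure.dirac (x i)) =
      ∑ i : ι, (ENNReal.ofReal (w i)).toReal • f (x i) := by
  rw [integral_finset_sum_measure]
  · refine Finset.sum_congr rfl fun i _ => ?_
    rw [integral_smul_measure, integral_dirac]
  · exact fun i _ => ((my_integrable_dirac f (x i)).smul_measure ENNReal.ofReal_ne_top)

lemma integrable_finsum_dirac {α E ι : Type*} [MeasurableSpace α] [MeasurableSingletonClass α]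
    [NormedAddCommGroup E] [Fintype ι]
    (f : α → E) (x : ι → α) (w : ι → ℝ) :
    Integrable f (∑ i : ι, ENNReal.ofReal (w i) • Measure.dirac (x i)) :=
  integrable_finset_sum_measure.2 fun i _ =>
    ((my_integrable_dirac f (x i)).smul_measure ENNReal.ofReal_ne_top)

lemma exists_ab {γ : ℝ} (hγ0 : 0 < γ) (hγ1 : γ < 1) :
    ∃ a b : ℝ, a = Real.sqrt ((1-γ)/γ) ∧ 0 < a ∧ b < 0 ∧
      γ * a^2 = 1-γ ∧ (1-γ) * b^2 = γ ∧ γ * a + (1-γ) * b = 0 ∧ a * b = -1 := by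
  refine ⟨Real.sqrt ((1-γ)/γ), -(Real.sqrt (γ/(1-γ))), rfl, ?_, ?_, ?_, ?_, ?_, ?_⟩
  · exact Real.sqrt_pos.2 (div_pos (by linarith) hγ0)
  · have h1 : (0:ℝ) < 1 - γ := by linarith
    simpa using Real.sqrt_pos.2 (div_pos hγ0 h1)
  · rw [Real.sq_sqrt (le_of_lt (div_pos (by linarith) hγ0))]; field_simp
  · have h1 : (0:ℝ) < 1 - γ := by linarith
    rw [neg_pow, Real.sq_sqrt (le_of_lt (div_pos hγ0 h1))]; field_simp
  · have h1 : (0:ℝ) < 1 - γ := by linarith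
    have e1 : γ * Real.sqrt ((1-γ)/γ) = Real.sqrt (γ^2 * ((1-γ)/γ)) := by
      rw [Real.sqrt_mul (sq_nonneg γ), Real.sqrt_sq hγ0.le]
    have e2 : (1-γ) * Real.sqrt (γ/(1-γ)) = Real.sqrt ((1-γ)^2 * (γ/(1-γ))) := by
      rw [Real.sqrt_mul (sq_nonneg (1-γ)), Real.sqrt_sq h1.le]
    have e3 : γ^2 * ((1-γ)/γ) = (1-γ)^2 * (γ/(1-γ)) := by field_simp
    rw [mul_neg, e1, e2, e3]; ring
  · have h1 : (0:ℝ) < 1 - γ := by linarith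
    have hd1 : (0:ℝ) ≤ (1-γ)/γ := le_of_lt (div_pos h1 hγ0)
    rw [mul_neg, ← Real.sqrt_mul hd1,
      show (1-γ)/γ * (γ/(1-γ)) = 1 by field_simp, Real.sqrt_one]

lemma twopoint_inf' {γ : ℝ} (hγ0 : 0 < γ) (hγ1 : γ < 1) {a b : ℝ} (hba : b ≤ a) :
    (⨅ τ : ℝ, τ + (1/γ) * (γ * max (a - τ) 0 + (1-γ) * max (b - τ) 0)) = a := by
  have hlow : ∀ τ : ℝ, a ≤ τ + (1/γ) * (γ * max (a - τ) 0 + (1-γ) * max (b - τ) 0) := by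
    intro τ
    have h2 : (0:ℝ) ≤ (1-γ) * max (b - τ) 0 :=
      mul_nonneg (by linarith) (le_max_right _ _)
    have h3 : (1/γ) * (γ * max (a - τ) 0 + (1-γ) * max (b - τ) 0) ≥ max (a - τ) 0 := by
      rw [ge_iff_le, one_div, ← div_eq_inv_mul, le_div_iff₀ hγ0]
      nlinarith
    have h4 : a - τ ≤ max (a - τ) 0 := le_max_left _ _
    linarith
  refine le_antisymm ?_ (le_ciInf hlow)
  have hb : BddBelow (Set.range fun τ : ℝ => τ + (1/γ) * (γ * max (a - τ) 0 + (1-γ) * max (b - τ) 0)) :=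
    ⟨a, Set.forall_mem_range.2 hlow⟩
  calc (⨅ τ : ℝ, τ + (1/γ) * (γ * max (a - τ) 0 + (1-γ) * max (b - τ) 0))
      ≤ b + (1/γ) * (γ * max (a - b) 0 + (1-γ) * max (b - b) 0) := ciInf_le hb b
    _ = a := by
        rw [max_eq_left (by linarith : (0:ℝ) ≤ a - b), sub_self, max_self]
        field_simp
        ring

lemma cvar_le_sqrt {γ : ℝ} (hγ0 : 0 < γ) (hγ1 : γ < 1) {E : Type*} [MeasurableSpace E]
    (P : Measure E) [IsProbabilityMeasure P] (g : E → ℝ)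
    (hg : Integrable g P) (hg2 : Integrable (fun x => g x ^ 2) P)
    (hEg : ∫ x, g x ∂P = 0) (hEg2 : ∫ x, g x ^ 2 ∂P = 1) :
    CVaR γ P g ≤ Real.sqrt ((1 - γ) / γ) := by
  obtain ⟨a, b, hae, ha, hb, ha2, hb2, hmean, hab⟩ := exists_ab hγ0 hγ1
  rw [← hae]
  obtain ⟨τ0, hτ0⟩ : ∃ τ0 : ℝ, τ0 = (a + b)/2 := ⟨_, rfl⟩
  obtain ⟨c, hc⟩ : ∃ c : ℝ, c = (a - b)/2 := ⟨_, rfl⟩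
  have hcpos : 0 < c := by rw [hc]; linarith
  have hc2 : c^2 = 1 + τ0^2 := by rw [hc, hτ0]; linear_combination (-1 : ℝ) * hab
  have hgt : Integrable (fun x => g x - τ0) P := hg.sub (integrable_const τ0)
  have hgta : Integrable (fun x => |g x - τ0|) P := hgt.abs
  have i1 : Integrable (fun x => g x ^ 2 - 2 * τ0 * g x) P := hg2.sub (hg.const_mul _)
  have hgt2 : Integrable (fun x => (g x - τ0)^2) P := by
    have e : (fun x => (g x - τ0)^2) = fun x => (g x^2 - 2*τ0 * g x) + τ0^2 := by
      funext x; ring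
    rw [e]
    exact i1.add (integrable_const _)
  have hEgt2 : ∫ x, (g x - τ0)^2 ∂P = 1 + τ0^2 := by
    have e : (fun x => (g x - τ0)^2) = fun x => (g x^2 - 2*τ0 * g x) + τ0^2 := by
      funext x; ring
    rw [e, integral_add i1 (integrable_const _),
      integral_sub hg2 (hg.const_mul _), integral_const_mul, hEg, hEg2, integral_const]
    simp
  have hEabs : ∫ x, |g x - τ0| ∂P ≤ c := by
    have hpt : ∀ x, |g x - τ0| ≤ ((g x - τ0)^2 / c + c)/2 := by
      intro x
      rw [div_add' _ _ _ hcpos.ne', div_div, le_div_iff₀ (by positivity : (0:ℝ) < c*2)]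
      nlinarith [sq_nonneg (|g x - τ0| - c), sq_abs (g x - τ0)]
    have hint : Integrable (fun x => ((g x - τ0)^2 / c + c)/2) P :=
      ((hgt2.div_const c).add (integrable_const c)).div_const 2
    calc ∫ x, |g x - τ0| ∂P ≤ ∫ x, ((g x - τ0)^2 / c + c)/2 ∂P :=
          integral_mono hgta hint hpt
      _ = ((1 + τ0^2)/c + c)/2 := by
          rw [integral_div, integral_add (hgt2.div_const c) (integrable_const c),
            integral_div, hEgt2, integral_const]
          simp
      _ = c := by rw [← hc2]; field_simp; ring
  have hgmax : Integrable (fun x => max (g x - τ0) 0) P := hgt.pos_part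
  have hEmax : ∫ x, max (g x - τ0) 0 ∂P ≤ (-τ0 + c)/2 := by
    have hpt : ∀ x, max (g x - τ0) 0 ≤ ((g x - τ0) + |g x - τ0|)/2 := by
      intro x
      rcases le_total (g x - τ0) 0 with h' | h'
      · rw [max_eq_right h', abs_of_nonpos h']; linarith
      · rw [max_eq_left h', abs_of_nonneg h']; linarith
    calc ∫ x, max (g x - τ0) 0 ∂P ≤ ∫ x, ((g x - τ0) + |g x - τ0|)/2 ∂P :=
          integral_mono hgmax ((hgt.add hgta).div_const 2) hpt
      _ = ((∫ x, (g x - τ0) ∂P) + ∫ x, |g x - τ0| ∂P)/2 := by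
          rw [integral_div, integral_add hgt hgta]
      _ ≤ (-τ0 + c)/2 := by
          have he : ∫ x, (g x - τ0) ∂P = -τ0 := by
            rw [integral_sub hg (integrable_const τ0), hEg, integral_const]; simp
          rw [he]; linarith
  have hbdd : ∀ τ : ℝ, (0:ℝ) ≤ τ + (1/γ) * ∫ x, max (g x - τ) 0 ∂P := by
    intro τ
    have hgmaxτ : Integrable (fun x => max (g x - τ) 0) P :=
      (hg.sub (integrable_const τ)).pos_part
    have h5 : -τ ≤ ∫ x, max (g x - τ) 0 ∂P := by
      have he : ∫ x, (g x - τ) ∂P = -τ := by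
        rw [integral_sub hg (integrable_const τ), hEg, integral_const]; simp
      rw [← he]
      exact integral_mono (hg.sub (integrable_const τ)) hgmaxτ (fun x => le_max_left _ _)
    have h6 : (0:ℝ) ≤ ∫ x, max (g x - τ) 0 ∂P :=
      integral_nonneg fun x => le_max_right _ _
    have hγinv : (1:ℝ) ≤ 1/γ := by rw [le_div_iff₀ hγ0]; linarith
    rcases le_total τ 0 with h | h
    · have h8 : (1/γ) * (-τ) ≤ (1/γ) * ∫ x, max (g x - τ) 0 ∂P :=
        mul_le_mul_of_nonneg_left h5 (by positivity)
      nlinarith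
    · nlinarith
  have hle : CVaR γ P g ≤ τ0 + (1/γ) * ∫ x, max (g x - τ0) 0 ∂P :=
    ciInf_le ⟨0, Set.forall_mem_range.2 hbdd⟩ τ0
  have hfinal : τ0 + (1/γ) * ((-τ0 + c)/2) = a := by
    rw [hτ0, hc]
    field_simp
    linarith [hmean]
  calc CVaR γ P g ≤ τ0 + (1/γ) * ∫ x, max (g x - τ0) 0 ∂P := hle
    _ ≤ τ0 + (1/γ) * ((-τ0 + c)/2) := by
        have := mul_le_mul_of_nonneg_left hEmax (le_of_lt (by positivity : (0:ℝ) < 1/γ))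
        linarith
    _ = a := hfinal

-- coordinates of Euclidean space
lemma coord_le_norm {n : ℕ} (x : EuclideanSpace ℝ (Fin n)) (i : Fin n) : |x i| ≤ ‖x‖ := by
  rw [EuclideanSpace.norm_eq, ← Real.sqrt_sq_eq_abs]
  apply Real.sqrt_le_sqrt
  calc x i ^ 2 ≤ ∑ j : Fin n, ‖x j‖ ^ 2 := by
        refine Finset.single_le_sum (f := fun j => ‖x j‖ ^ 2) (fun j _ => sq_nonneg _)
          (Finset.mem_univ i) |>.trans_eq' ?_
        rw [Real.norm_eq_abs, sq_abs]
    _ = ∑ j : Fin n, ‖x j‖ ^ 2 := rfl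

lemma euclid_sum_apply {n : ℕ} {ι : Type*} (s : Finset ι) (f : ι → EuclideanSpace ℝ (Fin n))
    (i : Fin n) : (∑ k ∈ s, f k) i = ∑ k ∈ s, f k i := by
  induction s using Finset.cons_induction with
  | empty => rfl
  | cons a s ha ih => rw [Finset.sum_cons, Finset.sum_cons, ← ih]; rfl

end Aux
section MatrixAux

variable {n : ℕ}

def myG (w : Fin n → ℝ) : Matrix (Fin n) (Fin (n+1)) ℝ :=
  Matrix.of fun k p => Fin.cases (w k) (fun m => (if k = m then 1 else 0) - w m * w k) p

lemma myG_mul_transpose (w : Fin n → ℝ) (hw : ∑ k, w k ^ 2 = 1) :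
    myG w * (myG w)ᵀ = 1 := by
  ext k l
  simp only [Matrix.mul_apply, Matrix.transpose_apply, myG, Matrix.of_apply]
  rw [Fin.sum_univ_succ]
  simp only [Fin.cases_zero, Fin.cases_succ]
  have expand : ∀ m : Fin n, ((if k = m then 1 else 0) - w m * w k) * ((if l = m then 1 else 0) - w m * w l)
      = (if k = m then 1 else 0) * (if l = m then 1 else 0)
        - (if k = m then 1 else 0) * (w m * w l) - (if l = m then 1 else 0) * (w m * w k)
        + w m ^2 * (w k * w l) := by intro m; ring
  rw [Finset.sum_congr rfl (fun m _ => expand m)]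
  rw [Finset.sum_add_distrib, Finset.sum_sub_distrib, Finset.sum_sub_distrib]
  rw [← Finset.sum_mul, hw]
  have e1 : ∑ m : Fin n, (if k = m then 1 else 0) * (if l = m then (1:ℝ) else 0)
      = if k = l then 1 else 0 := by
    rw [Finset.sum_eq_single k]
    · simp [eq_comm]
    · intro m _ hm; simp [Ne.symm hm]
    · simp
  have e2 : ∑ m : Fin n, (if k = m then 1 else 0) * (w m * w l) = w k * w l := by
    rw [Finset.sum_eq_single k]
    · simp
    · intro m _ hm; simp [Ne.symm hm]
    · simp
  have e3 : ∑ m : Fin n, (if l = m then 1 else 0) * (w m * w k) = w l * w k := by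
    rw [Finset.sum_eq_single l]
    · simp
    · intro m _ hm; simp [Ne.symm hm]
    · simp
  rw [e1, e2, e3]
  by_cases h : k = l <;> simp [h, Matrix.one_apply] <;> ring

lemma myG_vecMul (w : Fin n → ℝ) (hw : ∑ k, w k ^ 2 = 1) (p : Fin (n+1)) :
    (∑ k, w k * myG w k p) = if p = 0 then 1 else 0 := by
  induction p using Fin.cases with
  | zero => simpa [myG, ← pow_two] using hw
  | succ m =>
    simp only [myG, Matrix.of_apply, Fin.cases_succ]
    have e : ∀ k : Fin n, w k * ((if k = m then 1 else 0) - w m * w k)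
        = (if k = m then 1 else 0) * w k - w m * w k ^ 2 := by intro k; ring
    rw [Finset.sum_congr rfl fun k _ => e k, Finset.sum_sub_distrib, ← Finset.mul_sum, hw]
    rw [Finset.sum_eq_single m]
    · simp [Fin.succ_ne_zero]
    · intro x _ hx; simp [hx]
    · simp

end MatrixAux

section OmegaAux

variable {n : ℕ} {γ a b : ℝ}

def tpt (a b : ℝ) (ω : Bool × Fin n × Bool) : Fin (n+1) → ℝ :=
  fun p => Fin.cases (if ω.1 then a else b)
    (fun m => if m = ω.2.1 then (if ω.2.2 then Real.sqrt n else -Real.sqrt n) else 0) p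

def twt (γ : ℝ) (ω : Bool × Fin n × Bool) : ℝ :=
  (if ω.1 then γ else 1-γ) * ((n:ℝ)⁻¹ * 2⁻¹)

lemma twt_nonneg (hγ0 : 0 < γ) (hγ1 : γ < 1) (ω : Bool × Fin n × Bool) : 0 ≤ twt γ ω := by
  unfold twt
  have : (0:ℝ) ≤ (n:ℝ)⁻¹ * 2⁻¹ := by positivity
  split <;> nlinarith

lemma K0 (hn : 0 < n) : ∑ ω : Bool × Fin n × Bool, twt γ ω = 1 := by
  have hn' : (n:ℝ) ≠ 0 := Nat.cast_ne_zero.2 hn.ne'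
  rw [Fintype.sum_prod_type]
  simp [twt, Fintype.sum_bool, Finset.sum_const, Finset.card_univ]
  field_simp
  ring

lemma K1 (hn : 0 < n) (hmean : γ * a + (1-γ) * b = 0) (p : Fin (n+1)) :
    ∑ ω : Bool × Fin n × Bool, twt γ ω * tpt a b ω p = 0 := by
  have hn' : (n:ℝ) ≠ 0 := Nat.cast_ne_zero.2 hn.ne'
  induction p using Fin.cases with
  | zero =>
    rw [Fintype.sum_prod_type]
    simp only [twt, tpt, Fin.cases_zero]
    simp [Fintype.sum_bool, Finset.sum_const, Finset.card_univ]
    field_simp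
    nlinarith [hmean]
  | succ m =>
    rw [Fintype.sum_prod_type]
    refine Finset.sum_eq_zero fun s _ => ?_
    rw [Fintype.sum_prod_type]
    refine Finset.sum_eq_zero fun m' _ => ?_
    rw [Fintype.sum_bool]
    simp only [twt, tpt, Fin.cases_succ]
    cases s <;> by_cases h : m = m' <;> simp [h] <;> ring

lemma K2 (hn : 0 < n) (hvar : γ * a^2 + (1-γ) * b^2 = 1) (p q : Fin (n+1)) :
    ∑ ω : Bool × Fin n × Bool, twt γ ω * (tpt a b ω p * tpt a b ω q)
      = if p = q then 1 else 0 := by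
  have hn' : (n:ℝ) ≠ 0 := Nat.cast_ne_zero.2 hn.ne'
  have hsq : Real.sqrt n * Real.sqrt n = n := Real.mul_self_sqrt (Nat.cast_nonneg n)
  induction p using Fin.cases with
  | zero =>
    induction q using Fin.cases with
    | zero =>
      simp only [if_pos rfl]
      rw [Fintype.sum_prod_type]
      simp only [twt, tpt, Fin.cases_zero]
      simp [Fintype.sum_bool, Finset.sum_const, Finset.card_univ]
      field_simp
      nlinarith [hvar]
    | succ m =>
      rw [if_neg (by simp [Fin.succ_ne_zero, eq_comm] : ¬ (0 : Fin (n+1)) = m.succ)]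
      rw [Fintype.sum_prod_type]
      refine Finset.sum_eq_zero fun s _ => ?_
      rw [Fintype.sum_prod_type]
      refine Finset.sum_eq_zero fun m' _ => ?_
      rw [Fintype.sum_bool]
      simp only [twt, tpt, Fin.cases_succ, Fin.cases_zero]
      cases s <;> by_cases h : m = m' <;> simp [h] <;> ring
  | succ m =>
    induction q using Fin.cases with
    | zero =>
      rw [if_neg (Fin.succ_ne_zero m)]
      rw [Fintype.sum_prod_type]
      refine Finset.sum_eq_zero fun s _ => ?_
      rw [Fintype.sum_prod_type]
      refine Finset.sum_eq_zero fun m' _ => ?_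
      rw [Fintype.sum_bool]
      simp only [twt, tpt, Fin.cases_succ, Fin.cases_zero]
      cases s <;> by_cases h : m = m' <;> simp [h] <;> ring
    | succ m' =>
      by_cases hmm : m = m'
      · subst hmm
        rw [if_pos rfl]
        rw [Fintype.sum_prod_type]
        have inner : ∀ s : Bool, ∑ y : Fin n × Bool,
            twt γ (s, y) * (tpt a b (s, y) m.succ * tpt a b (s, y) m.succ)
            = (if s then γ else 1-γ) * 2⁻¹ * 2 := by
          intro s
          rw [Fintype.sum_prod_type]
          rw [Finset.sum_eq_single m]
          · rw [Fintype.sum_bool]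
            simp only [twt, tpt, Fin.cases_succ, if_pos rfl]
            cases s <;> simp <;> field_simp <;> ring
          · intro m'' _ hne
            rw [Fintype.sum_bool]
            simp only [twt, tpt, Fin.cases_succ]
            rw [if_neg (Ne.symm hne), if_neg (Ne.symm hne)]
            ring
          · simp
        rw [Fintype.sum_bool, inner true, inner false]
        norm_num
        ring
      · rw [if_neg (by simpa [Fin.succ_inj] using hmm)]
        rw [Fintype.sum_prod_type]
        refine Finset.sum_eq_zero fun s _ => ?_
        rw [Fintype.sum_prod_type]
        refine Finset.sum_eq_zero fun m'' _ => ?_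
        rw [Fintype.sum_bool]
        simp only [twt, tpt, Fin.cases_succ]
        by_cases h1 : m = m''
        · have h2 : ¬ m' = m'' := fun hh => hmm (h1.trans hh.symm)
          simp [h1, h2]
        · simp [h1]

lemma sum_wt_fun0 (hn : 0 < n) (F : ℝ → ℝ) :
    ∑ ω : Bool × Fin n × Bool, twt γ ω * F (tpt a b ω 0) = γ * F a + (1-γ) * F b := by
  have hn' : (n:ℝ) ≠ 0 := Nat.cast_ne_zero.2 hn.ne'
  rw [Fintype.sum_prod_type]
  simp only [twt, tpt, Fin.cases_zero]
  simp [Fintype.sum_bool, Finset.sum_const, Finset.card_univ]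
  field_simp

lemma sum_wt_affine (hn : 0 < n) (hmean : γ * a + (1-γ) * b = 0) (c : ℝ)
    (v : Fin (n+1) → ℝ) :
    ∑ ω : Bool × Fin n × Bool, twt γ ω * (c + ∑ p, v p * tpt a b ω p) = c := by
  have e : ∀ ω : Bool × Fin n × Bool, twt γ ω * (c + ∑ p, v p * tpt a b ω p)
      = twt γ ω * c + ∑ p, v p * (twt γ ω * tpt a b ω p) := by
    intro ω
    rw [mul_add, Finset.mul_sum]
    congr 1
    exact Finset.sum_congr rfl fun p _ => by ring
  rw [Finset.sum_congr rfl fun ω _ => e ω, Finset.sum_add_distrib, ← Finset.sum_mul,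
    K0 hn, one_mul, Finset.sum_comm]
  have e2 : ∀ p : Fin (n+1), ∑ ω : Bool × Fin n × Bool, v p * (twt γ ω * tpt a b ω p) = 0 := by
    intro p
    rw [← Finset.mul_sum, K1 hn hmean p, mul_zero]
  rw [Finset.sum_congr rfl fun p _ => e2 p, Finset.sum_const, smul_zero, add_zero]

lemma sum_wt_quad (hn : 0 < n) (hvar : γ * a^2 + (1-γ) * b^2 = 1)
    (u v : Fin (n+1) → ℝ) :
    ∑ ω : Bool × Fin n × Bool,
        twt γ ω * ((∑ p, u p * tpt a b ω p) * (∑ q, v q * tpt a b ω q))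
      = ∑ p, u p * v p := by
  have e : ∀ ω : Bool × Fin n × Bool,
      twt γ ω * ((∑ p, u p * tpt a b ω p) * (∑ q, v q * tpt a b ω q))
      = ∑ p, ∑ q, (u p * v q) * (twt γ ω * (tpt a b ω p * tpt a b ω q)) := by
    intro ω
    rw [Finset.sum_mul_sum, Finset.mul_sum]
    refine Finset.sum_congr rfl fun p _ => ?_
    rw [Finset.mul_sum]
    exact Finset.sum_congr rfl fun q _ => by ring
  rw [Finset.sum_congr rfl fun ω _ => e ω, Finset.sum_comm]
  refine Finset.sum_congr rfl fun p _ => ?_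
  rw [Finset.sum_comm]
  have e2 : ∀ q : Fin (n+1),
      ∑ ω : Bool × Fin n × Bool, u p * v q * (twt γ ω * (tpt a b ω p * tpt a b ω q))
      = u p * v q * (if p = q then 1 else 0) := by
    intro q
    rw [← Finset.mul_sum, K2 hn hvar p q]
  rw [Finset.sum_congr rfl fun q _ => e2 q]
  rw [Finset.sum_eq_single p]
  · simp
  · intro q _ hq; simp [Ne.symm hq]
  · simp

end OmegaAux
section Part1

lemma cvar_upper_bound {n : ℕ} {γ : ℝ} (hγ0 : 0 < γ) (hγ1 : γ < 1)
    (α μ : EuclideanSpace ℝ (Fin n)) (S : Matrix (Fin n) (Fin n) ℝ)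
    (hσsq : 0 < ∑ i, ∑ j, α i * S i j * α j)
    (P : Measure (EuclideanSpace ℝ (Fin n))) (hP : IsProbabilityMeasure P)
    (h2 : FiniteSecondMoment P) (hm : meanVec P = μ) (hc : covMatrix P = S) :
    CVaR γ P (fun x => (∑ i, α i * (x i - μ i)) / Real.sqrt (∑ i, ∑ j, α i * S i j * α j))
      ≤ Real.sqrt ((1-γ)/γ) := by
  haveI := hP
  obtain ⟨σ, hσdef⟩ : ∃ σ : ℝ, σ = Real.sqrt (∑ i, ∑ j, α i * S i j * α j) := ⟨_, rfl⟩
  have hσ0 : 0 < σ := hσdef ▸ Real.sqrt_pos.2 hσsq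
  have hσ2 : σ^2 = ∑ i, ∑ j, α i * S i j * α j := hσdef ▸ Real.sq_sqrt hσsq.le
  rw [← hσdef]
  have h2' : Integrable (fun x : EuclideanSpace ℝ (Fin n) => ‖x‖^2) P := h2
  have hbound : Integrable (fun x : EuclideanSpace ℝ (Fin n) => 1 + ‖x‖^2) P :=
    (integrable_const 1).add h2'
  have hxi : ∀ i, Integrable (fun x : EuclideanSpace ℝ (Fin n) => x i) P := by
    intro i
    refine hbound.mono' (by fun_prop : Measurable fun x : EuclideanSpace ℝ (Fin n) => x i).aestronglyMeasurable ?_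
    filter_upwards with x
    have h1 := coord_le_norm x i
    have h2 := norm_nonneg x
    rw [Real.norm_eq_abs]
    nlinarith
  have hij : ∀ i j, Integrable (fun x : EuclideanSpace ℝ (Fin n) =>
      (x i - μ i) * (x j - μ j)) P := by
    intro i j
    have hbound2 : Integrable (fun x : EuclideanSpace ℝ (Fin n) => 2*‖x‖^2 + 2*‖μ‖^2) P :=
      (h2'.const_mul 2).add (integrable_const _)
    refine hbound2.mono' (Measurable.aestronglyMeasurable ?_) ?_
    · exact (by fun_prop : Measurable fun x : EuclideanSpace ℝ (Fin n) =>
        (x i - μ i) * (x j - μ j))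
    · filter_upwards with x
      have h1 : |x i - μ i| ≤ ‖x‖ + ‖μ‖ :=
        (abs_sub _ _).trans (add_le_add (coord_le_norm x i) (coord_le_norm μ i))
      have h1' : |x j - μ j| ≤ ‖x‖ + ‖μ‖ :=
        (abs_sub _ _).trans (add_le_add (coord_le_norm x j) (coord_le_norm μ j))
      rw [Real.norm_eq_abs, abs_mul]
      have h3 := norm_nonneg x
      have h4 := norm_nonneg μ
      have h5 : |x i - μ i| * |x j - μ j| ≤ (‖x‖ + ‖μ‖) * (‖x‖ + ‖μ‖) :=
        mul_le_mul h1 h1' (abs_nonneg _) (by linarith)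
      nlinarith [sq_nonneg (‖x‖ - ‖μ‖)]
  have hxiμ : ∀ i, Integrable (fun x : EuclideanSpace ℝ (Fin n) => x i - μ i) P :=
    fun i => (hxi i).sub (integrable_const _)
  have hL : Integrable (fun x : EuclideanSpace ℝ (Fin n) => ∑ i, α i * (x i - μ i)) P := by
    refine integrable_finset_sum _ fun i _ => ?_
    exact (hxiμ i).const_mul (α i)
  have eL2 : (fun x : EuclideanSpace ℝ (Fin n) => (∑ i, α i * (x i - μ i))^2)
      = fun x => ∑ i, ∑ j, (α i * α j) * ((x i - μ i) * (x j - μ j)) := by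
    funext x
    rw [sq, Finset.sum_mul_sum]
    exact Finset.sum_congr rfl fun i _ => Finset.sum_congr rfl fun j _ => by ring
  have hL2 : Integrable (fun x : EuclideanSpace ℝ (Fin n) =>
      (∑ i, α i * (x i - μ i))^2) P := by
    rw [eL2]
    refine integrable_finset_sum _ fun i _ => integrable_finset_sum _ fun j _ => ?_
    exact (hij i j).const_mul _
  -- mean of coordinates
  have hid : Integrable (fun x : EuclideanSpace ℝ (Fin n) => x) P := by
    refine hbound.mono' measurable_id.aestronglyMeasurable ?_
    filter_upwards with x
    have h2 := norm_nonneg x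
    nlinarith
  have hmean_i : ∀ i, ∫ x, x i ∂P = μ i := by
    intro i
    have hcomm := (EuclideanSpace.proj (𝕜 := ℝ) i).integral_comp_comm hid
    have : (EuclideanSpace.proj (𝕜 := ℝ) i) (∫ x, x ∂P) = μ i := by
      have hμ : (∫ x, x ∂P) = μ := hm
      rw [hμ]
      rfl
    rw [← this, ← hcomm]
    rfl
  have hEL : ∫ x, (∑ i, α i * (x i - μ i)) ∂P = 0 := by
    rw [integral_finset_sum _ fun i _ => (hxiμ i).const_mul (α i)]
    refine Finset.sum_eq_zero fun i _ => ?_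
    rw [integral_const_mul, integral_sub (hxi i) (integrable_const _), hmean_i i,
      integral_const]
    simp
  have hcov_ij : ∀ i j, ∫ x, (x i - μ i) * (x j - μ j) ∂P = S i j := by
    intro i j
    rw [← hc]
    show _ = covMatrix P i j
    unfold covMatrix
    rw [hm]
    rfl
  have hEL2 : ∫ x, (∑ i, α i * (x i - μ i))^2 ∂P = ∑ i, ∑ j, α i * S i j * α j := by
    rw [show (fun x : EuclideanSpace ℝ (Fin n) => (∑ i, α i * (x i - μ i))^2) =
        fun x => ∑ i, ∑ j, (α i * α j) * ((x i - μ i) * (x j - μ j)) from eL2]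
    rw [integral_finset_sum _ fun i _ => integrable_finset_sum _ fun j _ => (hij i j).const_mul _]
    refine Finset.sum_congr rfl fun i _ => ?_
    rw [integral_finset_sum _ fun j _ => (hij i j).const_mul _]
    refine Finset.sum_congr rfl fun j _ => ?_
    rw [integral_const_mul, hcov_ij i j]
    ring
  -- apply the generic bound
  have eg : (fun x : EuclideanSpace ℝ (Fin n) => (∑ i, α i * (x i - μ i)) / σ)
      = fun x => (∑ i, α i * (x i - μ i)) / σ := rfl
  refine cvar_le_sqrt hγ0 hγ1 P _ (hL.div_const σ) ?_ ?_ ?_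
  · have e : (fun x : EuclideanSpace ℝ (Fin n) => ((∑ i, α i * (x i - μ i)) / σ)^2)
        = fun x => ((∑ i, α i * (x i - μ i))^2) / σ^2 := by
      funext x; rw [div_pow]
    rw [e]
    exact hL2.div_const _
  · rw [integral_div, hEL, zero_div]
  · have e : (fun x : EuclideanSpace ℝ (Fin n) => ((∑ i, α i * (x i - μ i)) / σ)^2)
        = fun x => ((∑ i, α i * (x i - μ i))^2) / σ^2 := by
      funext x; rw [div_pow]
    rw [e, integral_div, hEL2, ← hσ2, div_self (by positivity)]

end Part1
section Witness

open scoped MatrixOrder in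
lemma witness_exists {n : ℕ} {γ : ℝ} (hγ0 : 0 < γ) (hγ1 : γ < 1) (hn : 0 < n)
    {a b : ℝ} (ha0 : 0 < a) (hb0 : b < 0) (hmean : γ*a + (1-γ)*b = 0)
    (hvar : γ*a^2 + (1-γ)*b^2 = 1)
    (α μ : EuclideanSpace ℝ (Fin n)) (S : Matrix (Fin n) (Fin n) ℝ) (hS : S.PosDef)
    (hσsq : 0 < ∑ i, ∑ j, α i * S i j * α j) :
    ∃ P : Measure (EuclideanSpace ℝ (Fin n)), IsProbabilityMeasure P ∧ FiniteSecondMoment P ∧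
      meanVec P = μ ∧ covMatrix P = S ∧
      CVaR γ P (fun x =>
        (∑ i, α i * (x i - μ i)) / Real.sqrt (∑ i, ∑ j, α i * S i j * α j)) = a := by
  obtain ⟨σ, hσdef⟩ : ∃ σ : ℝ, σ = Real.sqrt (∑ i, ∑ j, α i * S i j * α j) := ⟨_, rfl⟩
  have hσ0 : 0 < σ := hσdef ▸ Real.sqrt_pos.2 hσsq
  have hσ2 : σ^2 = ∑ i, ∑ j, α i * S i j * α j := hσdef ▸ Real.sq_sqrt hσsq.le
  rw [← hσdef]
  have hCC : CFC.sqrt S * CFC.sqrt S = S := CFC.sqrt_mul_sqrt_self S hS.posSemidef.nonneg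
  have hCT : (CFC.sqrt S)ᵀ = CFC.sqrt S := by
    have h := (CFC.sqrt_nonneg S).posSemidef.1
    simpa [Matrix.IsHermitian, Matrix.conjTranspose_eq_transpose_of_trivial] using h
  obtain ⟨C, hCdef⟩ : ∃ C : Matrix (Fin n) (Fin n) ℝ, C = CFC.sqrt S := ⟨_, rfl⟩
  rw [← hCdef] at hCC hCT
  have hCsym : ∀ i k, C i k = C k i := by
    intro i k
    conv_lhs => rw [← hCT]
    rfl
  obtain ⟨w, hwdef⟩ : ∃ w : Fin n → ℝ, w = fun k => (C *ᵥ α) k / σ := ⟨_, rfl⟩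
  have hCw : ∀ k, (C *ᵥ α) k = σ * w k := by
    intro k
    rw [hwdef]
    field_simp
  have hdot : ∑ k, ((C *ᵥ α) k)^2 = ∑ i, ∑ j, α i * S i j * α j := by
    have e1 : ∑ k, ((C *ᵥ α) k)^2 = (C *ᵥ α) ⬝ᵥ (C *ᵥ α) := by
      simp [dotProduct, pow_two]
    have e2 : (C *ᵥ α) ᵥ* C = S *ᵥ α := by
      rw [show (C *ᵥ α) ᵥ* C = (C *ᵥ α) ᵥ* Cᵀ from by rw [hCT]]
      rw [Matrix.vecMul_transpose, Matrix.mulVec_mulVec, hCC]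
    rw [e1, dotProduct_mulVec, e2]
    rw [dotProduct]
    refine Finset.sum_congr rfl fun i _ => ?_
    rw [Matrix.mulVec, dotProduct, Finset.sum_mul]
    exact Finset.sum_congr rfl fun j _ => by ring
  have hw : ∑ k, w k ^ 2 = 1 := by
    rw [hwdef]
    simp only [div_pow]
    rw [← Finset.sum_div, hdot, ← hσ2, div_self (by positivity)]
  obtain ⟨A, hAdef⟩ : ∃ A : Matrix (Fin n) (Fin (n+1)) ℝ, A = C * myG w := ⟨_, rfl⟩
  have hAAT : A * Aᵀ = S := by
    rw [hAdef, Matrix.transpose_mul, Matrix.mul_assoc, ← Matrix.mul_assoc (myG w),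
      myG_mul_transpose w hw, Matrix.one_mul, hCT, hCC]
  have hαA : ∀ p, ∑ i, α i * A i p = if p = 0 then σ else 0 := by
    intro p
    have e1 : ∀ i, α i * A i p = ∑ k, α i * (C i k * myG w k p) := by
      intro i
      rw [hAdef]
      show α i * ∑ k, C i k * myG w k p = _
      rw [Finset.mul_sum]
    rw [Finset.sum_congr rfl fun i _ => e1 i, Finset.sum_comm]
    have e2 : ∀ k, ∑ i, α i * (C i k * myG w k p) = (σ * w k) * myG w k p := by
      intro k
      rw [← hCw k]
      show _ = (∑ j, C k j * α j) * myG w k p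
      rw [Finset.sum_mul]
      refine Finset.sum_congr rfl fun i _ => ?_
      rw [hCsym i k]
      ring
    rw [Finset.sum_congr rfl fun k _ => e2 k]
    have e3 : ∑ k, (σ * w k) * myG w k p = σ * ∑ k, w k * myG w k p := by
      rw [Finset.mul_sum]
      exact Finset.sum_congr rfl fun k _ => by ring
    rw [e3, myG_vecMul w hw p]
    split <;> simp
  -- the points and the measure
  obtain ⟨X, hXdef⟩ : ∃ X : Bool × Fin n × Bool → EuclideanSpace ℝ (Fin n),
      X = fun ω => (EuclideanSpace.equiv (Fin n) ℝ).symm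
        (fun i => μ i + ∑ p, A i p * tpt a b ω p) := ⟨_, rfl⟩
  have hXi : ∀ ω i, X ω i = μ i + ∑ p, A i p * tpt a b ω p := by
    intro ω i
    rw [hXdef]
    rfl
  have hXdiff : ∀ ω i, X ω i - μ i = ∑ p, A i p * tpt a b ω p := by
    intro ω i
    rw [hXi]
    ring
  obtain ⟨P, hPdef⟩ : ∃ P : Measure (EuclideanSpace ℝ (Fin n)),
      P = ∑ ω : Bool × Fin n × Bool, ENNReal.ofReal (twt γ ω) • Measure.dirac (X ω) := ⟨_, rfl⟩
  have hint : ∀ f : EuclideanSpace ℝ (Fin n) → ℝ,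
      ∫ x, f x ∂P = ∑ ω : Bool × Fin n × Bool, twt γ ω * f (X ω) := by
    intro f
    rw [hPdef, integral_finsum_dirac]
    refine Finset.sum_congr rfl fun ω _ => ?_
    rw [ENNReal.toReal_ofReal (twt_nonneg hγ0 hγ1 ω), smul_eq_mul]
  have hprob : IsProbabilityMeasure P := by
    constructor
    rw [hPdef, Measure.finset_sum_apply]
    simp only [Measure.smul_apply, smul_eq_mul]
    calc ∑ ω : Bool × Fin n × Bool, ENNReal.ofReal (twt γ ω) * Measure.dirac (X ω) Set.univ
        = ∑ ω : Bool × Fin n × Bool, ENNReal.ofReal (twt γ ω) := by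
          refine Finset.sum_congr rfl fun ω _ => ?_
          rw [Measure.dirac_apply_of_mem (Set.mem_univ _), mul_one]
      _ = ENNReal.ofReal (∑ ω : Bool × Fin n × Bool, twt γ ω) :=
          (ENNReal.ofReal_sum_of_nonneg fun ω _ => twt_nonneg hγ0 hγ1 ω).symm
      _ = 1 := by rw [K0 hn, ENNReal.ofReal_one]
  have h2mom : FiniteSecondMoment P := by
    rw [hPdef]
    exact integrable_finsum_dirac _ _ _
  have hmeanP : meanVec P = μ := by
    unfold meanVec
    rw [hPdef, integral_finsum_dirac]
    ext i
    rw [euclid_sum_apply]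
    have e : ∀ ω : Bool × Fin n × Bool,
        ((ENNReal.ofReal (twt γ ω)).toReal • X ω) i
        = twt γ ω * (μ i + ∑ p, A i p * tpt a b ω p) := by
      intro ω
      have : ((ENNReal.ofReal (twt γ ω)).toReal • X ω) i
          = (ENNReal.ofReal (twt γ ω)).toReal * X ω i := rfl
      rw [this, ENNReal.toReal_ofReal (twt_nonneg hγ0 hγ1 ω), hXi]
    rw [Finset.sum_congr rfl fun ω _ => e ω]
    exact sum_wt_affine hn hmean (μ i) (fun p => A i p)
  have hcovP : covMatrix P = S := by
    unfold covMatrix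
    rw [hmeanP]
    ext i j
    simp only [Matrix.of_apply]
    rw [hint (fun x => (x i - μ i) * (x j - μ j))]
    have e : ∀ ω : Bool × Fin n × Bool,
        twt γ ω * ((X ω i - μ i) * (X ω j - μ j))
        = twt γ ω * ((∑ p, A i p * tpt a b ω p) * (∑ q, A j q * tpt a b ω q)) := by
      intro ω
      rw [hXdiff, hXdiff]
    rw [Finset.sum_congr rfl fun ω _ => e ω,
      sum_wt_quad hn hvar (fun p => A i p) (fun q => A j q)]
    calc ∑ p, A i p * A j p = (A * Aᵀ) i j := by
          rw [Matrix.mul_apply]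
          exact Finset.sum_congr rfl fun p _ => by rw [Matrix.transpose_apply]
      _ = S i j := by rw [hAAT]
  have hfX : ∀ ω, (∑ i, α i * (X ω i - μ i)) / σ = tpt a b ω 0 := by
    intro ω
    have e1 : ∀ i, α i * (X ω i - μ i) = ∑ p, α i * (A i p * tpt a b ω p) := by
      intro i
      rw [hXdiff, Finset.mul_sum]
    have e2 : ∀ p, ∑ i, α i * (A i p * tpt a b ω p) = (∑ i, α i * A i p) * tpt a b ω p := by
      intro p
      rw [Finset.sum_mul]
      exact Finset.sum_congr rfl fun i _ => by ring
    rw [Finset.sum_congr rfl fun i _ => e1 i, Finset.sum_comm,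
      Finset.sum_congr rfl fun p _ => e2 p,
      Finset.sum_congr rfl fun p _ => by rw [hαA p]]
    rw [Finset.sum_eq_single (0 : Fin (n+1))]
    · rw [if_pos rfl, mul_comm, mul_div_assoc, div_self hσ0.ne', mul_one]
    · intro p _ hp
      rw [if_neg hp, zero_mul]
    · simp
  have hτint : ∀ τ : ℝ, ∫ x, max ((∑ i, α i * (x i - μ i)) / σ - τ) 0 ∂P
      = γ * max (a - τ) 0 + (1-γ) * max (b - τ) 0 := by
    intro τ
    rw [hint (fun x => max ((∑ i, α i * (x i - μ i)) / σ - τ) 0)]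
    rw [Finset.sum_congr rfl fun ω _ => by rw [hfX ω]]
    exact sum_wt_fun0 hn (fun y => max (y - τ) 0)
  refine ⟨P, hprob, h2mom, hmeanP, hcovP, ?_⟩
  unfold CVaR
  rw [iInf_congr (fun τ => by rw [hτint τ])]
  exact twopoint_inf' hγ0 hγ1 (by linarith)

end Witness
lemma sigma_sq_pos {n : ℕ} (S : Matrix (Fin n) (Fin n) ℝ) (hS : S.PosDef)
    (α : EuclideanSpace ℝ (Fin n)) (hα : α ≠ 0) :
    0 < ∑ i, ∑ j, α i * S i j * α j := by
  have hα' : (fun i => α i) ≠ (0 : Fin n → ℝ) := by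
    intro h
    exact hα (by ext i; simpa using congrFun h i)
  have h := hS.dotProduct_mulVec_pos hα'
  simp only [RCLike.re_to_real] at h
  calc (0:ℝ) < star (fun i => α i) ⬝ᵥ S.mulVec (fun i => α i) := h
    _ = ∑ i, ∑ j, α i * S i j * α j := by
      simp [dotProduct, Matrix.mulVec, Finset.mul_sum, mul_assoc]

-- STATEMENT 3
theorem stmt3 {n : ℕ} (γ : ℝ) (hγ0 : 0 < γ) (hγ1 : γ < 1)
    (α μ : EuclideanSpace ℝ (Fin n)) (hα : α ≠ 0)
    (S : Matrix (Fin n) (Fin n) ℝ) (hS : S.PosDef) :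
    IsLUB {r : ℝ | ∃ P : Measure (EuclideanSpace ℝ (Fin n)),
        IsProbabilityMeasure P ∧ FiniteSecondMoment P ∧ meanVec P = μ ∧ covMatrix P = S ∧
        r = CVaR γ P (fun x =>
          (∑ i, α i * (x i - μ i)) / Real.sqrt (∑ i, ∑ j, α i * S i j * α j))}
      (Real.sqrt ((1 - γ) / γ)) := by
  obtain ⟨a, b, hae, ha0, hb0, ha2, hb2, hmean, hab⟩ := exists_ab hγ0 hγ1
  have hn : 0 < n := by
    rcases Nat.eq_zero_or_pos n with h0 | h
    · exfalso
      apply hα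
      subst h0
      ext i; exact Fin.elim0 i
    · exact h
  have hσsq : 0 < ∑ i, ∑ j, α i * S i j * α j := sigma_sq_pos S hS α hα
  constructor
  · rintro r ⟨P, hP, h2, hm, hc, rfl⟩
    exact cvar_upper_bound hγ0 hγ1 α μ S hσsq P hP h2 hm hc
  · intro ub hub
    obtain ⟨P, hp1, hp2, hp3, hp4, hp5⟩ :=
      witness_exists hγ0 hγ1 hn ha0 hb0 hmean (by linarith) α μ S hS hσsq
    have hmem : a ∈ {r : ℝ | ∃ P : Measure (EuclideanSpace ℝ (Fin n)),
        IsProbabilityMeasure P ∧ FiniteSecondMoment P ∧ meanVec P = μ ∧ covMatrix P = S ∧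
        r = CVaR γ P (fun x =>
          (∑ i, α i * (x i - μ i)) / Real.sqrt (∑ i, ∑ j, α i * S i j * α j))} :=
      ⟨P, hp1, hp2, hp3, hp4, hp5.symm⟩
    calc Real.sqrt ((1 - γ) / γ) = a := hae.symm
      _ ≤ ub := hub hmem

end
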